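/- arXiv:1010.3304 — 5 statements merged into one kernel-verified Lean document; each statement's English description precedes it below -/
import Mathlib

section
/- Fix l ≥ 0 and a vertex v of the tree at depth l (i.e., a fixed admissible sequence of length l, which is a vertex of T_n for every n ≥ l). Then the proportion of traffic through v satisfies p_n(v) → (1/β(l))·(2 − 1/β(l) − 1/β(l+1)) as n → ∞, where β(l) = k_1 k_2 ⋯ k_l (and β(0) = 1). -/
/-!
A pair `{u, w}` avoids `v` exactly when both endpoints lie outside the subtree of `v`, or both
lie in the subtree of the same child `v ++ [x]`. Hence
`l_n(v) = C(N, 2) - C(N - D, 2) - ∑ₓ C(Dₓ, 2)`, where `D` and `Dₓ` are the sizes of these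
subtrees in `T_n`. A vertex at depth `l` has `(N(n) - ∑_{m<l} β(m)) / β(l)` descendants in `T_n`, so
`D ~ N / β(l)` and `Dₓ ~ N / β(l + 1)`, and `p_n(v)` tends to
`1 - (1 - 1/β(l))² - k_{l+1} / β(l+1)²`, which is the claimed limit since `β(l+1) = β(l) k_{l+1}`.
-/

open Finset Filter

namespace TreeTraffic

/-- `beta k l = k 1 * k 2 * ⋯ * k l`, with `beta k 0 = 1`. -/
def beta (k : ℕ → ℕ) (l : ℕ) : ℕ := ∏ i ∈ Finset.range l, k (i + 1)

/-- `Ncard k n = ∑_{l=0}^n beta k l`, the number of vertices of `T_n`. -/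
def Ncard (k : ℕ → ℕ) (n : ℕ) : ℕ := ∑ l ∈ Finset.range (n + 1), beta k l

/-- The set of admissible sequences of length exactly `m`:
vertices at depth `m`, i.e. lists `[x_1, …, x_m]` with `x_i ∈ {1, …, k i}`. -/
def level (k : ℕ → ℕ) : ℕ → Finset (List ℕ)
  | 0 => {[]}
  | m + 1 => (level k m).biUnion (fun l => (Finset.Icc 1 (k (m + 1))).image (fun x => l ++ [x]))

/-- The vertex set of the truncated tree `T_n`: all admissible sequences of length `≤ n`. -/
def T (k : ℕ → ℕ) (n : ℕ) : Finset (List ℕ) :=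
  (Finset.range (n + 1)).biUnion (level k)

/-- Length of the longest common prefix of two lists. -/
def lcp : List ℕ → List ℕ → ℕ
  | a :: as, b :: bs => if a = b then lcp as bs + 1 else 0
  | _, _ => 0

/-- The graph distance between two vertices of the tree. -/
def treeDist (u w : List ℕ) : ℕ := (u.length - lcp u w) + (w.length - lcp u w)

/-- `v` lies on the (unique) geodesic path joining `u` and `w` in the tree. -/
def onPath (v u w : List ℕ) : Prop := treeDist u v + treeDist v w = treeDist u w

instance (v u w : List ℕ) : Decidable (onPath v u w) := by
  unfold onPath; infer_instance

/-- The traffic through `v` in `T_n`: the number of unordered pairs `{u, w}` of distinct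
vertices of `T_n` such that `v` lies on the unique path joining `u` and `w`. -/
def traffic (k : ℕ → ℕ) (n : ℕ) (v : List ℕ) : ℕ :=
  (((T k n).powersetCard 2).filter
    (fun s => ∃ u ∈ s, ∃ w ∈ s, u ≠ w ∧ onPath v u w)).card

/-- The proportion of the traffic of `T_n` passing through `v`:
`p_n(v) = l_n(v) / (N (N - 1) / 2)`. -/
noncomputable def trafficProp (k : ℕ → ℕ) (n : ℕ) (v : List ℕ) : ℝ :=
  (traffic k n v : ℝ) / ((Ncard k n : ℝ) * ((Ncard k n : ℝ) - 1) / 2)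

theorem lcp_comm (u w : List ℕ) : lcp u w = lcp w u := by
  induction u generalizing w with
  | nil => cases w <;> rfl
  | cons a as ih =>
    cases w with
    | nil => rfl
    | cons b bs => by_cases h : a = b <;> simp [lcp, h, ih, eq_comm]

theorem lcp_le_length_left (u w : List ℕ) : lcp u w ≤ u.length := by
  induction u generalizing w with
  | nil => cases w <;> simp [lcp]
  | cons a as ih =>
    cases w with
    | nil => simp [lcp]
    | cons b bs => by_cases h : a = b <;> simp [lcp, h, ih bs]

theorem lcp_le_length_right (u w : List ℕ) : lcp u w ≤ w.length :=
  lcp_comm u w ▸ lcp_le_length_left w u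

theorem length_le_lcp_iff {p u w : List ℕ} (hp : p <+: u) : p.length ≤ lcp u w ↔ p <+: w := by
  induction p generalizing u w with
  | nil => simp
  | cons c p ih =>
    cases u with
    | nil => simp at hp
    | cons x u =>
      obtain ⟨rfl, hpu⟩ := List.cons_prefix_cons.1 hp
      cases w with
      | nil => simp [lcp]
      | cons y w =>
        by_cases hcy : c = y
        · subst hcy
          simp [lcp, List.cons_prefix_cons, ih hpu]
        · simp [lcp, hcy, List.cons_prefix_cons]

theorem prefix_iff_length_le_lcp {u w : List ℕ} : u <+: w ↔ u.length ≤ lcp u w :=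
  (length_le_lcp_iff List.prefix_rfl).symm

theorem min_lcp_le_lcp (u v w : List ℕ) : min (lcp u v) (lcp v w) ≤ lcp u w := by
  set p := u.take (min (lcp u v) (lcp v w))
  have hp : p.length = min (lcp u v) (lcp v w) := by
    simp only [p, List.length_take]
    have := lcp_le_length_left u v
    omega
  have hpu : p <+: u := List.take_prefix _ _
  have hpv : p <+: v := (length_le_lcp_iff hpu).1 (by omega)
  exact hp ▸ (length_le_lcp_iff hpu).2 ((length_le_lcp_iff hpv).1 (by omega))

theorem treeDist_comm (u w : List ℕ) : treeDist u w = treeDist w u := by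
  rw [treeDist, treeDist, lcp_comm, add_comm]

theorem onPath_comm {v u w : List ℕ} : onPath v u w ↔ onPath v w u := by
  rw [onPath, onPath, treeDist_comm u v, treeDist_comm v w, treeDist_comm u w, add_comm]

/-- Since the two smallest of `lcp u v`, `lcp v w`, `lcp u w` are always equal, the path equation
`|v| + lcp u w = lcp u v + lcp v w` reduces to linear arithmetic. -/
theorem onPath_iff {v u w : List ℕ} :
    onPath v u w ↔ (v <+: u ∨ v <+: w) ∧ lcp u w ≤ v.length := by
  have := min_lcp_le_lcp u v w
  have := min_lcp_le_lcp u w v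
  have := min_lcp_le_lcp v u w
  have := lcp_le_length_left u v
  have := lcp_le_length_right u v
  have := lcp_le_length_left v w
  have := lcp_le_length_right v w
  have := lcp_le_length_left u w
  have := lcp_le_length_right u w
  rw [onPath, treeDist, treeDist, treeDist, prefix_iff_length_le_lcp (w := u),
    prefix_iff_length_le_lcp (w := w), lcp_comm v u] at *
  rw [lcp_comm w v] at *
  omega

theorem exists_append_singleton_prefix {v u : List ℕ} (h : v <+: u) (hlt : v.length < u.length) :
    ∃ x, v ++ [x] <+: u := by
  obtain ⟨t, rfl⟩ := h
  cases t with
  | nil => simp at hlt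
  | cons x t => exact ⟨x, t, by simp⟩

theorem length_lt_lcp_iff {v u w : List ℕ} (hv : v <+: u) :
    v.length < lcp u w ↔ ∃ x, v ++ [x] <+: u ∧ v ++ [x] <+: w := by
  constructor
  · intro h
    obtain ⟨x, hx⟩ := exists_append_singleton_prefix hv
      (h.trans_le (lcp_le_length_left u w))
    exact ⟨x, hx, (length_le_lcp_iff hx).1 (by simpa using h)⟩
  · rintro ⟨x, hxu, hxw⟩
    simpa using (length_le_lcp_iff hxu).2 hxw

theorem not_onPath_iff {v u w : List ℕ} :
    ¬ onPath v u w ↔ (¬ v <+: u ∧ ¬ v <+: w) ∨ ∃ x, v ++ [x] <+: u ∧ v ++ [x] <+: w := by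
  rw [onPath_iff, not_and_or, not_or, not_le]
  by_cases hvu : v <+: u
  · simp [hvu, length_lt_lcp_iff hvu]
  by_cases hvw : v <+: w
  · simp [hvu, hvw, lcp_comm u w, length_lt_lcp_iff hvw, and_comm]
  simp only [hvu, hvw, not_false_eq_true, and_self, true_or]

theorem beta_succ (k : ℕ → ℕ) (l : ℕ) : beta k (l + 1) = beta k l * k (l + 1) :=
  prod_range_succ _ _

theorem one_le_beta {k : ℕ → ℕ} (hk : ∀ i, 1 ≤ k i) (l : ℕ) : 1 ≤ beta k l :=
  one_le_prod' fun i _ => hk (i + 1)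

theorem length_of_mem_level {k : ℕ → ℕ} {m : ℕ} {u : List ℕ} (h : u ∈ level k m) :
    u.length = m := by
  induction m generalizing u with
  | zero => simp_all [level]
  | succ m ih =>
    simp only [level, Finset.mem_biUnion, Finset.mem_image] at h
    obtain ⟨u, hu, x, -, rfl⟩ := h
    simp [ih hu]

theorem append_singleton_mem_level_iff {k : ℕ → ℕ} {l x : ℕ} {v : List ℕ} :
    v ++ [x] ∈ level k (l + 1) ↔ v ∈ level k l ∧ x ∈ Icc 1 (k (l + 1)) := by
  simp only [level, Finset.mem_biUnion, Finset.mem_image]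
  constructor
  · rintro ⟨u, hu, y, hy, h⟩
    obtain ⟨rfl, hyx⟩ := List.append_inj' h rfl
    exact ⟨hu, by simpa [List.singleton_inj.1 hyx] using hy⟩
  · rintro ⟨hv, hx⟩
    exact ⟨v, hv, x, hx, rfl⟩

theorem mem_level_of_prefix {k : ℕ → ℕ} {m : ℕ} {u p : List ℕ} (hu : u ∈ level k m)
    (hp : p <+: u) : p ∈ level k p.length := by
  induction m generalizing u with
  | zero => simp_all [level]
  | succ m ih =>
    simp only [level, Finset.mem_biUnion, Finset.mem_image] at hu
    obtain ⟨u, hu, x, hx, rfl⟩ := hu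
    rcases List.prefix_concat_iff.1 hp with rfl | hp
    · simpa [length_of_mem_level hu] using append_singleton_mem_level_iff.2 ⟨hu, hx⟩
    · exact ih hu hp

theorem card_filter_prefix_level_succ (k : ℕ → ℕ) {m : ℕ} {v : List ℕ} (hv : v.length ≤ m) :
    #{u ∈ level k (m + 1) | v <+: u} = #{u ∈ level k m | v <+: u} * k (m + 1) := by
  have hsplit : {u ∈ level k (m + 1) | v <+: u}
      = {u ∈ level k m | v <+: u}.biUnion (fun u => (Icc 1 (k (m + 1))).image (u ++ [·])) := by
    ext w
    simp only [level, mem_filter, mem_biUnion, mem_image]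
    constructor
    · rintro ⟨⟨u, hu, x, hx, rfl⟩, hp⟩
      refine ⟨u, ⟨hu, ?_⟩, x, hx, rfl⟩
      exact List.prefix_of_prefix_length_le hp (List.prefix_append u [x])
        (by rw [length_of_mem_level hu]; exact hv)
    · rintro ⟨u, ⟨hu, hp⟩, x, hx, rfl⟩
      exact ⟨⟨u, hu, x, hx, rfl⟩, hp.trans (List.prefix_append u [x])⟩
  rw [hsplit, card_biUnion, sum_const_nat]
  · intro u _
    rw [card_image_of_injective _ (fun x y h => by simpa using h), Nat.card_Icc,
      Nat.add_sub_cancel]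
  · intro u₁ _ u₂ _ hne
    simp only [Function.onFun, disjoint_left, mem_image]
    rintro _ ⟨x₁, _, rfl⟩ ⟨x₂, _, h⟩
    exact hne (List.append_inj' h rfl).1.symm

theorem beta_mul_card_filter_prefix_level (k : ℕ → ℕ) {l : ℕ} {v : List ℕ} (hv : v ∈ level k l)
    (j : ℕ) : beta k l * #{u ∈ level k (l + j) | v <+: u} = beta k (l + j) := by
  induction j with
  | zero =>
    have : {u ∈ level k l | v <+: u} = {v} := by
      ext u
      simp only [mem_filter, mem_singleton]
      refine ⟨fun ⟨hu, hp⟩ => ?_, by rintro rfl; exact ⟨hv, List.prefix_rfl⟩⟩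
      exact (hp.eq_of_length (by rw [length_of_mem_level hu, length_of_mem_level hv])).symm
    simp [this]
  | succ j ih =>
    rw [← add_assoc, card_filter_prefix_level_succ k (by rw [length_of_mem_level hv]; omega),
      ← mul_assoc, ih, beta_succ]

theorem card_level (k : ℕ → ℕ) (m : ℕ) : #(level k m) = beta k m := by
  simpa [beta] using
    beta_mul_card_filter_prefix_level k (l := 0) (by simp [level] : [] ∈ level k 0) m

theorem disjoint_level (k : ℕ → ℕ) {m₁ m₂ : ℕ} (h : m₁ ≠ m₂) :
    Disjoint (level k m₁) (level k m₂) :=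
  disjoint_left.2 fun _ h₁ h₂ => h ((length_of_mem_level h₁).symm.trans (length_of_mem_level h₂))

theorem card_T (k : ℕ → ℕ) (n : ℕ) : #(T k n) = Ncard k n := by
  rw [T, card_biUnion fun _ _ _ _ h => disjoint_level k h]
  exact sum_congr rfl fun m _ => card_level k m

def subtree (k : ℕ → ℕ) (n : ℕ) (v : List ℕ) : Finset (List ℕ) := {u ∈ T k n | v <+: u}

theorem beta_mul_card_subtree_add (k : ℕ → ℕ) {l n : ℕ} {v : List ℕ} (hv : v ∈ level k l)
    (hn : l ≤ n) : beta k l * #(subtree k n v) + ∑ m ∈ range l, beta k m = Ncard k n := by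
  have hshallow : ∀ m ∈ range l, beta k l * #{u ∈ level k m | v <+: u} = 0 := fun m hm => by
    refine mul_eq_zero_of_right _ (card_eq_zero.2 (filter_eq_empty_iff.2 fun u hu hp => ?_))
    have := hp.length_le
    rw [length_of_mem_level hv, length_of_mem_level hu] at this
    exact (mem_range.1 hm).not_ge this
  obtain ⟨j, rfl⟩ := Nat.exists_eq_add_of_le hn
  rw [subtree, T, filter_biUnion, card_biUnion fun _ _ _ _ h => (disjoint_level k h).mono
    (filter_subset _ _) (filter_subset _ _), mul_sum, Ncard, add_assoc, sum_range_add _ l (j + 1),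
    sum_range_add _ l (j + 1), sum_eq_zero hshallow, zero_add, add_comm]
  simp only [beta_mul_card_filter_prefix_level k hv]

theorem _root_.Finset.disjoint_powersetCard_of_disjoint {α : Type*} {s t : Finset α} {n : ℕ}
    (h : Disjoint s t) (hn : n ≠ 0) : Disjoint (s.powersetCard n) (t.powersetCard n) := by
  refine disjoint_left.2 fun u hs ht => ?_
  rw [mem_powersetCard] at hs ht
  obtain ⟨a, ha⟩ := card_ne_zero.1 (hs.2 ▸ hn)
  exact disjoint_left.1 h (hs.1 ha) (ht.1 ha)

theorem exists_mem_pair_onPath_iff {v a b : List ℕ} (hab : a ≠ b) :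
    (∃ u ∈ ({a, b} : Finset (List ℕ)), ∃ w ∈ ({a, b} : Finset (List ℕ)), u ≠ w ∧ onPath v u w)
      ↔ onPath v a b := by
  simp only [mem_insert, mem_singleton, exists_eq_or_imp, exists_eq_left, ne_eq,
    not_true_eq_false, false_and, or_false, false_or, hab, Ne.symm hab, not_false_eq_true,
    true_and]
  exact or_iff_left_of_imp onPath_comm.1

theorem not_onPath_iff_of_mem_T {k : ℕ → ℕ} {l n : ℕ} {v a b : List ℕ} (hv : v ∈ level k l)
    (ha : a ∈ T k n) : ¬ onPath v a b ↔ (¬ v <+: a ∧ ¬ v <+: b) ∨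
      ∃ x ∈ Icc 1 (k (l + 1)), v ++ [x] <+: a ∧ v ++ [x] <+: b := by
  rw [not_onPath_iff]
  refine or_congr_right ⟨fun ⟨x, hxa, hxb⟩ => ⟨x, ?_, hxa, hxb⟩, fun ⟨x, _, hx⟩ => ⟨x, hx⟩⟩
  obtain ⟨m, -, ham⟩ := mem_biUnion.1 ha
  have := mem_level_of_prefix ham hxa
  rw [List.length_append, length_of_mem_level hv, List.length_singleton] at this
  exact (append_singleton_mem_level_iff.1 this).2

theorem traffic_add_card_choose_two (k : ℕ → ℕ) {l : ℕ} {v : List ℕ} (hv : v ∈ level k l)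
    (n : ℕ) : traffic k n v + (#{u ∈ T k n | ¬ v <+: u}).choose 2
      + ∑ x ∈ Icc 1 (k (l + 1)), (#(subtree k n (v ++ [x]))).choose 2 = (Ncard k n).choose 2 := by
  set A := {u ∈ T k n | ¬ v <+: u}
  set B := fun x => subtree k n (v ++ [x])
  have hcompl : {s ∈ (T k n).powersetCard 2 | ¬ ∃ u ∈ s, ∃ w ∈ s, u ≠ w ∧ onPath v u w}
      = A.powersetCard 2 ∪ (Icc 1 (k (l + 1))).biUnion fun x => (B x).powersetCard 2 := by
    ext s
    by_cases hs : s.card = 2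
    swap
    · simp [hs]
    obtain ⟨a, b, hab, rfl⟩ := card_eq_two.1 hs
    simp only [mem_filter, mem_union, mem_biUnion, mem_powersetCard, hs, and_true,
      insert_subset_iff, singleton_subset_iff, exists_mem_pair_onPath_iff hab, A, B, subtree]
    by_cases ha : a ∈ T k n
    · by_cases hb : b ∈ T k n
      · simp [ha, hb, not_onPath_iff_of_mem_T hv ha]
      · simp [hb]
    · simp [ha]
  have hdisjA : ∀ x, Disjoint A (B x) := fun x => disjoint_left.2 fun u hA hB =>
    (mem_filter.1 hA).2 ((List.prefix_append v [x]).trans (mem_filter.1 hB).2)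
  have hdisjB : ∀ x y, x ≠ y → Disjoint (B x) (B y) := fun x y hxy => disjoint_left.2
    fun u hx hy => hxy <| by
      simpa using (List.prefix_of_prefix_length_le (mem_filter.1 hx).2 (mem_filter.1 hy).2
        (by simp)).eq_of_length (by simp)
  have hsplit := card_filter_add_card_filter_not (s := (T k n).powersetCard 2)
    fun s => ∃ u ∈ s, ∃ w ∈ s, u ≠ w ∧ onPath v u w
  rw [hcompl, card_union_of_disjoint, card_biUnion, card_powersetCard, card_powersetCard,
    card_T] at hsplit
  · simpa only [traffic, card_powersetCard, add_assoc, B] using hsplit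
  · exact fun x _ y _ hxy => disjoint_powersetCard_of_disjoint (hdisjB x y hxy) two_ne_zero
  · exact disjoint_biUnion_right _ _ _ |>.2 fun x _ =>
      disjoint_powersetCard_of_disjoint (hdisjA x) two_ne_zero

theorem _root_.Filter.Tendsto.cast_choose_two_div {α : Type*} {L : Filter α} {x N : α → ℕ}
    {c : ℝ} (hx : Tendsto (fun a => (x a : ℝ) / N a) L (nhds c)) (hN : Tendsto N L atTop) :
    Tendsto (fun a => ((x a).choose 2 : ℝ) / (N a).choose 2) L (nhds (c ^ 2)) := by
  have hN' : Tendsto (fun a => (N a : ℝ)) L atTop := tendsto_natCast_atTop_atTop.comp hN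
  have hinv : Tendsto (fun a => 1 / (N a : ℝ)) L (nhds 0) := by
    simpa only [one_div, Function.comp_def] using tendsto_inv_atTop_zero.comp hN'
  have hlim := (hx.mul (hx.sub hinv)).div (tendsto_const_nhds.sub hinv)
    (by norm_num : (1 : ℝ) - 0 ≠ 0)
  rw [sub_zero, sub_zero, div_one, ← sq] at hlim
  refine hlim.congr' ?_
  filter_upwards [hN'.eventually_ge_atTop 2] with a ha
  have : (N a : ℝ) - 1 ≠ 0 := by linarith
  rw [Pi.div_apply, Nat.cast_choose_two, Nat.cast_choose_two]
  field_simp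

theorem succ_le_Ncard {k : ℕ → ℕ} (hk : ∀ i, 1 ≤ k i) (n : ℕ) : n + 1 ≤ Ncard k n := by
  simpa [Ncard] using sum_le_sum fun m (_ : m ∈ range (n + 1)) => one_le_beta hk m

theorem tendsto_Ncard_atTop {k : ℕ → ℕ} (hk : ∀ i, 1 ≤ k i) : Tendsto (Ncard k) atTop atTop :=
  tendsto_atTop_mono (succ_le_Ncard hk) (tendsto_add_atTop_nat 1)

theorem tendsto_card_subtree_div_Ncard {k : ℕ → ℕ} (hk : ∀ i, 1 ≤ k i) {l : ℕ} {v : List ℕ}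
    (hv : v ∈ level k l) :
    Tendsto (fun n => (#(subtree k n v) : ℝ) / Ncard k n) atTop (nhds (1 / beta k l)) := by
  have hN := (tendsto_natCast_atTop_atTop (R := ℝ)).comp (tendsto_Ncard_atTop hk)
  have hβ : (beta k l : ℝ) ≠ 0 := by have := one_le_beta hk l; positivity
  set C : ℝ := ((∑ m ∈ range l, beta k m : ℕ) : ℝ)
  have hlim := ((tendsto_const_nhds (x := 1)).sub
    ((tendsto_const_nhds (x := C)).div_atTop hN)).div_const (beta k l : ℝ)
  rw [sub_zero] at hlim
  refine hlim.congr' ?_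
  filter_upwards [eventually_ge_atTop l, hN.eventually_gt_atTop 0] with n hn hpos
  have hcount : (beta k l : ℝ) * #(subtree k n v) + C = Ncard k n := by
    rw [← Nat.cast_mul, ← Nat.cast_add, beta_mul_card_subtree_add k hv hn]
  simp only [Function.comp_apply] at hpos ⊢
  field_simp
  linarith

theorem tendsto_card_compl_subtree_div_Ncard {k : ℕ → ℕ} (hk : ∀ i, 1 ≤ k i) {l : ℕ}
    {v : List ℕ} (hv : v ∈ level k l) :
    Tendsto (fun n => (#{u ∈ T k n | ¬ v <+: u} : ℝ) / Ncard k n) atTop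
      (nhds (1 - 1 / beta k l)) := by
  refine (tendsto_const_nhds.sub (tendsto_card_subtree_div_Ncard hk hv)).congr fun n => ?_
  have hpos : (0 : ℝ) < Ncard k n := by exact_mod_cast (succ_le_Ncard hk n).trans_lt' n.succ_pos
  have hcount : (#(subtree k n v) : ℝ) + #{u ∈ T k n | ¬ v <+: u} = Ncard k n := by
    exact_mod_cast (card_filter_add_card_filter_not _).trans (card_T k n)
  field_simp
  linarith

theorem trafficProp_eq {k : ℕ → ℕ} {l n : ℕ} {v : List ℕ} (hv : v ∈ level k l)
    (hn : 2 ≤ Ncard k n) : trafficProp k n v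
      = 1 - ((#{u ∈ T k n | ¬ v <+: u}).choose 2 : ℝ) / (Ncard k n).choose 2
        - ∑ x ∈ Icc 1 (k (l + 1)),
            ((#(subtree k n (v ++ [x]))).choose 2 : ℝ) / (Ncard k n).choose 2 := by
  have hpos : ((Ncard k n).choose 2 : ℝ) ≠ 0 := Nat.cast_ne_zero.2 (Nat.choose_pos hn).ne'
  have hcount := traffic_add_card_choose_two k hv n
  rw [trafficProp, ← Nat.cast_choose_two, ← sum_div, eq_sub_iff_add_eq, eq_sub_iff_add_eq,
    ← add_div, ← add_div, div_eq_one_iff_eq hpos, ← hcount]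
  push_cast
  ring

/-- For a vertex `v` at depth `l`, the proportion of traffic through `v` converges to
`(1/β(l)) (2 - 1/β(l) - 1/β(l+1))` as `n → ∞`. -/
theorem traffic_prop_tendsto (k : ℕ → ℕ) (hk : ∀ i, 1 ≤ k i) (l : ℕ) (v : List ℕ)
    (hv : v ∈ level k l) :
    Tendsto (fun n => trafficProp k n v) atTop
      (nhds ((1 / (beta k l : ℝ)) *
        (2 - 1 / (beta k l : ℝ) - 1 / (beta k (l + 1) : ℝ)))) := by
  have hN := tendsto_Ncard_atTop hk
  have hlim := (tendsto_const_nhds (x := (1 : ℝ))).sub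
    ((tendsto_card_compl_subtree_div_Ncard hk hv).cast_choose_two_div hN) |>.sub
    (tendsto_finsetSum (Icc 1 (k (l + 1))) fun x hx =>
      (tendsto_card_subtree_div_Ncard hk
        (append_singleton_mem_level_iff.2 ⟨hv, hx⟩)).cast_choose_two_div hN)
  have hβ : (beta k l : ℝ) ≠ 0 := by have := one_le_beta hk l; positivity
  have hkl : (k (l + 1) : ℝ) ≠ 0 := by have := hk (l + 1); positivity
  have hval : 1 - (1 - 1 / (beta k l : ℝ)) ^ 2
      - ∑ _x ∈ Icc 1 (k (l + 1)), (1 / (beta k (l + 1) : ℝ)) ^ 2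
      = 1 / (beta k l : ℝ) * (2 - 1 / (beta k l : ℝ) - 1 / (beta k (l + 1) : ℝ)) := by
    rw [sum_const, Nat.card_Icc, Nat.add_sub_cancel, nsmul_eq_mul, beta_succ]
    push_cast
    field_simp
    ring
  rw [← hval]
  exact hlim.congr' <| (hN.eventually_ge_atTop 2).mono fun n hn => (trafficProp_eq hv hn).symm

end TreeTraffic
end

section
/- Let G be a finite tree on N vertices and let v be a vertex of G. Let s_1, …, s_m be the cardinalities of the connected components of the subgraph of G induced on the complement of {v}. Then the number of unordered pairs {u,w} of distinct vertices of G such that v lies on the unique path from u to w (pairs with u = v or w = v included) equals ∑_{i<j} s_i s_j + (N−1), where ∑_{i<j} s_i s_j = ((N−1)² − ∑_i s_i²)/2. -/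
open Finset

/-!
Give `v` the label `0` and every other vertex the label `i + 1` of its component `e⁻¹ i` in
`G - v`. For `u ≠ w`, a path from `u` to `w` avoiding `v` is the same as a walk in `G - v`, so
`v` lies on every `u`–`w` path iff `u` and `w` carry different labels. Unordered pairs with
different labels correspond to ordered pairs `(a, b)` with `label a < label b`, and there are
`∑_{i<j} cᵢ cⱼ` of these, `cᵢ` being the size of label class `i`. Here `c₀ = 1` and
`cᵢ₊₁ = sᵢ`, so the pairs with a vertex labelled `0` contribute `∑ sᵢ = N - 1`. The second
identity is `(∑ sᵢ)² = ∑ sᵢ² + 2 ∑_{i<j} sᵢ sⱼ`.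
-/

theorem Finset.eq_pair_of_card_eq_two {α : Type*} [DecidableEq α] {S : Finset α} (hS : #S = 2)
    {u w : α} (hu : u ∈ S) (hw : w ∈ S) (hne : u ≠ w) : S = {u, w} :=
  (eq_of_subset_of_card_le (by simp [insert_subset_iff, hu, hw]) (by rw [hS, card_pair hne])).symm

theorem ncard_pairs_ne_eq_card_filter_lt {α ι : Type*} [Fintype α] [DecidableEq α]
    [LinearOrder ι] (f : α → ι) :
    {S : Finset α | #S = 2 ∧ ∃ u ∈ S, ∃ w ∈ S, u ≠ w ∧ f u ≠ f w}.ncard =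
      #{q : α × α | f q.1 < f q.2} := by
  rw [← Set.ncard_coe_finset]
  symm
  refine Set.ncard_congr (fun q _ => {q.1, q.2}) ?_ ?_ ?_
  · rintro ⟨a, b⟩ hab
    simp only [coe_filter, mem_univ, true_and, Set.mem_ofPred_eq] at hab ⊢
    have hne : a ≠ b := fun h => hab.ne (congrArg f h)
    exact ⟨card_pair hne, a, by simp, b, by simp, hne, hab.ne⟩
  · rintro ⟨a, b⟩ ⟨a', b'⟩ hab hab' h
    simp only [coe_filter, mem_univ, true_and, Set.mem_ofPred_eq] at hab hab'
    rw [← coe_inj, coe_pair, coe_pair, Set.pair_eq_pair_iff] at h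
    rcases h with ⟨rfl, rfl⟩ | ⟨rfl, rfl⟩
    · rfl
    · exact (lt_asymm hab hab').elim
  · rintro S ⟨hS, u, hu, w, hw, hne, hf⟩
    rw [eq_pair_of_card_eq_two hS hu hw hne]
    rcases hf.lt_or_gt with h | h
    · exact ⟨(u, w), by simpa using h, rfl⟩
    · exact ⟨(w, u), by simpa using h, pair_comm w u⟩

theorem card_filter_lt_eq_sum_card_mul_card {α ι : Type*} [Fintype α] [LinearOrder ι]
    [Fintype ι] (f : α → ι) :
    #{q : α × α | f q.1 < f q.2} =
      ∑ p ∈ univ.filter (fun p : ι × ι => p.1 < p.2), #{a | f a = p.1} * #{a | f a = p.2} := by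
  rw [card_eq_sum_card_fiberwise (f := Prod.map f f) (t := univ.filter fun p : ι × ι => p.1 < p.2)
    fun q hq => by simpa using hq]
  refine sum_congr rfl fun p hp => ?_
  rw [← card_product]
  congr 1
  ext ⟨a, b⟩
  simp only [mem_filter, mem_univ, true_and, mem_product, Prod.map, Prod.ext_iff] at hp ⊢
  constructor
  · exact And.right
  · rintro ⟨ha, hb⟩
    exact ⟨ha ▸ hb ▸ hp, ha, hb⟩

theorem Fin.sum_filter_fst_lt_snd_succ {M : Type*} [AddCommMonoid M] {m : ℕ}
    (g : Fin (m + 1) → Fin (m + 1) → M) :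
    ∑ p ∈ univ.filter (fun p : Fin (m + 1) × Fin (m + 1) => p.1 < p.2), g p.1 p.2 =
      ∑ j : Fin m, g 0 j.succ +
        ∑ p ∈ univ.filter (fun p : Fin m × Fin m => p.1 < p.2), g p.1.succ p.2.succ := by
  simp only [sum_filter, Fintype.sum_prod_type, Fin.sum_univ_succ, Fin.succ_pos, Fin.not_lt_zero,
    Fin.succ_lt_succ_iff, if_true, if_false, zero_add]

theorem sq_sum_eq_sum_sq_add_two_mul_sum_filter_lt {ι R : Type*} [LinearOrder ι] [Fintype ι]
    [CommSemiring R] (f : ι → R) :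
    (∑ i, f i) ^ 2 =
      ∑ i, f i ^ 2 + 2 * ∑ p ∈ univ.filter (fun p : ι × ι => p.1 < p.2), f p.1 * f p.2 := by
  have htrichotomy : ∀ i j, f i * f j = (if i = j then f i * f j else 0) +
      (if i < j then f i * f j else 0) + (if j < i then f j * f i else 0) := by
    intro i j
    rcases lt_trichotomy i j with h | rfl | h
    · simp [h, h.ne, h.not_gt]
    · simp
    · simp [h, h.ne', h.not_gt, mul_comm]
  rw [sq, sum_mul_sum, sum_filter, Fintype.sum_prod_type,
    Fintype.sum_congr _ _ fun i => Fintype.sum_congr _ _ (htrichotomy i)]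
  simp only [sum_add_distrib, sum_ite_eq, mem_univ, if_true, ← sq]
  rw [sum_comm (f := fun i j => if j < i then f j * f i else 0)]
  ring

namespace SimpleGraph

variable {V : Type*} {G : SimpleGraph V}

theorem reachable_induce_iff_exists_path {s : Set V} {u w : V} (hu : u ∈ s) (hw : w ∈ s) :
    (G.induce s).Reachable ⟨u, hu⟩ ⟨w, hw⟩ ↔ ∃ p : G.Path u w, ∀ x ∈ p.val.support, x ∈ s := by
  classical
  constructor
  · rintro ⟨q⟩
    let q' : G.Walk u w := q.map (Embedding.induce s).toHom
    refine ⟨q'.toPath, fun x hx => ?_⟩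
    obtain ⟨y, -, rfl⟩ :=
      List.mem_map.mp (Walk.support_map _ q ▸ q'.support_toPath_subset_support hx)
    exact y.2
  · rintro ⟨p, hp⟩
    exact ⟨p.val.induce s hp⟩

theorem forall_path_mem_support_iff_not_reachable {v u w : V} (hu : u ≠ v) (hw : w ≠ v) :
    (∀ p : G.Path u w, v ∈ p.val.support) ↔
      ¬ (G.induce {v}ᶜ).Reachable ⟨u, hu⟩ ⟨w, hw⟩ :=
  ((reachable_induce_iff_exists_path hu hw).not.trans (by simp)).symm

variable [DecidableEq V] (G) (v : V) {m : ℕ} (e : (G.induce {v}ᶜ).ConnectedComponent ≃ Fin m)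

def componentIndex (x : V) : Fin (m + 1) :=
  if h : x = v then 0 else (e ((G.induce {v}ᶜ).connectedComponentMk ⟨x, h⟩)).succ

theorem componentIndex_eq_zero_iff {x : V} : componentIndex G v e x = 0 ↔ x = v := by
  unfold componentIndex
  split_ifs with h <;> simp [h, Fin.succ_ne_zero]

theorem componentIndex_eq_succ_iff {x : V} (i : Fin m) :
    componentIndex G v e x = i.succ ↔
      ∃ h : x ≠ v, e ((G.induce {v}ᶜ).connectedComponentMk ⟨x, h⟩) = i := by
  unfold componentIndex
  split_ifs with h <;> simp [h, (Fin.succ_ne_zero i).symm]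

theorem componentIndex_eq_iff {u w : V} (hu : u ≠ v) (hw : w ≠ v) :
    componentIndex G v e u = componentIndex G v e w ↔
      (G.induce {v}ᶜ).Reachable ⟨u, hu⟩ ⟨w, hw⟩ := by
  simp [componentIndex, hu, hw, ConnectedComponent.eq]

theorem forall_path_mem_support_iff_componentIndex_ne {u w : V} (huw : u ≠ w) :
    (∀ p : G.Path u w, v ∈ p.val.support) ↔ componentIndex G v e u ≠ componentIndex G v e w := by
  by_cases hu : u = v
  · subst hu
    rw [(componentIndex_eq_zero_iff G u e).2 rfl]
    exact iff_of_true (fun p => p.val.start_mem_support)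
      fun h => huw ((componentIndex_eq_zero_iff G u e).1 h.symm).symm
  by_cases hw : w = v
  · subst hw
    rw [(componentIndex_eq_zero_iff G w e).2 rfl]
    exact iff_of_true (fun p => p.val.end_mem_support)
      fun h => huw ((componentIndex_eq_zero_iff G w e).1 h)
  exact (forall_path_mem_support_iff_not_reachable hu hw).trans
    (componentIndex_eq_iff G v e hu hw).not.symm

variable [Fintype V]

theorem card_filter_componentIndex_eq_zero : #{x | componentIndex G v e x = 0} = 1 := by
  simp [componentIndex_eq_zero_iff, filter_eq']

theorem card_filter_componentIndex_eq_succ (i : Fin m) :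
    #{x | componentIndex G v e x = i.succ} = Nat.card (e.symm i).supp := by
  rw [Nat.card_coe_set_eq, ← Set.ncard_image_of_injective _ Subtype.val_injective,
    ← Set.ncard_coe_finset]
  congr 1
  ext x
  simp [componentIndex_eq_succ_iff, ConnectedComponent.mem_supp_iff, Equiv.eq_symm_apply]

end SimpleGraph

theorem traffic_through_vertex_eq_general {V : Type*} [Fintype V] [DecidableEq V]
    (G : SimpleGraph V) (v : V)
    (m : ℕ) (s : Fin m → ℕ)
    (e : (G.induce ({v}ᶜ : Set V)).ConnectedComponent ≃ Fin m)
    (hs : ∀ c : (G.induce ({v}ᶜ : Set V)).ConnectedComponent, s (e c) = Nat.card c.supp) :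
    Set.ncard {S : Finset V | S.card = 2 ∧
        ∃ u ∈ S, ∃ w ∈ S, u ≠ w ∧ ∀ p : G.Path u w, v ∈ p.val.support} =
      (∑ p ∈ Finset.univ.filter (fun p : Fin m × Fin m => p.1 < p.2), s p.1 * s p.2) +
        (Fintype.card V - 1) ∧
    (∑ p ∈ Finset.univ.filter (fun p : Fin m × Fin m => p.1 < p.2), s p.1 * s p.2) =
      ((Fintype.card V - 1) ^ 2 - ∑ i : Fin m, s i ^ 2) / 2 := by
  set κ := G.componentIndex v e
  have hfiber_zero : #{x | κ x = 0} = 1 := G.card_filter_componentIndex_eq_zero v e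
  have hfiber_succ : ∀ i, #{x | κ x = i.succ} = s i := fun i => by
    rw [G.card_filter_componentIndex_eq_succ, ← hs, e.apply_symm_apply]
  have hsum : ∑ i, s i = Fintype.card V - 1 := by
    have := card_eq_sum_card_fiberwise (f := κ) (s := univ) (t := univ) fun _ _ => mem_univ _
    simp only [Fin.sum_univ_succ, hfiber_zero, hfiber_succ, card_univ] at this
    omega
  have hseparated :
      {S : Finset V | #S = 2 ∧ ∃ u ∈ S, ∃ w ∈ S, u ≠ w ∧ ∀ p : G.Path u w, v ∈ p.val.support} =
        {S | #S = 2 ∧ ∃ u ∈ S, ∃ w ∈ S, u ≠ w ∧ κ u ≠ κ w} :=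
    Set.ext fun _ => and_congr_right fun _ => exists_congr fun _ => and_congr_right fun _ =>
      exists_congr fun _ => and_congr_right fun _ =>
        and_congr_right (G.forall_path_mem_support_iff_componentIndex_ne v e)
  refine ⟨?_, ?_⟩
  · rw [hseparated, ncard_pairs_ne_eq_card_filter_lt, card_filter_lt_eq_sum_card_mul_card,
      Fin.sum_filter_fst_lt_snd_succ (fun i j => #{x | κ x = i} * #{x | κ x = j})]
    simp only [hfiber_zero, hfiber_succ, one_mul, hsum]
    omega
  · have := sq_sum_eq_sum_sq_add_two_mul_sum_filter_lt s
    rw [hsum] at this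
    omega

/-- Let `G` be a finite tree on `N` vertices, `v` a vertex, and let `s 0, …, s (m-1)` be the
cardinalities of the connected components of the subgraph induced on the complement of `{v}`.
Then the number of unordered pairs `{u, w}` of distinct vertices such that `v` lies on the
unique path from `u` to `w` (pairs with `u = v` or `w = v` included) equals
`∑_{i<j} s i * s j + (N - 1)`, where `∑_{i<j} s i * s j = ((N-1)² - ∑ i, (s i)²)/2`. -/
theorem traffic_through_vertex_eq {V : Type*} [Fintype V] [DecidableEq V]
    (G : SimpleGraph V) (hG : G.IsTree) (v : V)
    (m : ℕ) (s : Fin m → ℕ)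
    (e : (G.induce ({v}ᶜ : Set V)).ConnectedComponent ≃ Fin m)
    (hs : ∀ c : (G.induce ({v}ᶜ : Set V)).ConnectedComponent, s (e c) = Nat.card c.supp) :
    Set.ncard {S : Finset V | S.card = 2 ∧
        ∃ u ∈ S, ∃ w ∈ S, u ≠ w ∧ ∀ p : G.Path u w, v ∈ p.val.support} =
      (∑ p ∈ Finset.univ.filter (fun p : Fin m × Fin m => p.1 < p.2), s p.1 * s p.2) +
        (Fintype.card V - 1) ∧
    (∑ p ∈ Finset.univ.filter (fun p : Fin m × Fin m => p.1 < p.2), s p.1 * s p.2) =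
      ((Fintype.card V - 1) ^ 2 - ∑ i : Fin m, s i ^ 2) / 2 :=
  traffic_through_vertex_eq_general G v m s e hs
end

section
/- Let μ be a purely atomic Borel probability measure on a separable metric space X, i.e., there is a countable set A ⊆ X with μ(X \ A) = 0. Let E assign to each x ∈ X a Borel set E(x) ⊆ X with x ∉ E(x), and assume the function x ↦ μ(E(x)) is measurable. Then ∫ μ(E(x)) dμ(x) ≤ 1 − ∑_{a ∈ A} μ({a})² < 1. -/
/-!
Since `x ∉ E x`, the sets `E x` and `{x}` are disjoint, so `μ (E x) + μ {x} ≤ 1` for every `x`.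
Integrating against `μ`, which lives on the countable set `A`, turns `∫ μ {x} dμ(x)` into
`∑ μ {a}²`; this sum is positive because the atoms carry all the mass.
-/

open MeasureTheory
open scoped ENNReal

namespace MeasureTheory

variable {X : Type*} [MeasurableSpace X] {μ : Measure X} {A : Set X}

theorem lintegral_measure_singleton_eq_tsum_sq [MeasurableSingletonClass X]
    (hA : A.Countable) (hAc : μ Aᶜ = 0) :
    ∫⁻ x, μ {x} ∂μ = ∑' a : A, μ {(a : X)} ^ 2 := by
  have hrestr : μ.restrict A = μ := Measure.restrict_eq_self_of_ae_mem (ae_iff.2 hAc)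
  calc ∫⁻ x, μ {x} ∂μ = ∫⁻ x in A, μ {x} ∂μ := by rw [hrestr]
    _ = ∑' a : A, μ {(a : X)} ^ 2 := by
      rw [lintegral_countable _ hA]
      exact tsum_congr fun a => (sq _).symm

theorem measure_add_measure_singleton_le_one [IsProbabilityMeasure μ] {s : Set X} {x : X}
    (hs : MeasurableSet s) (hx : x ∉ s) : μ s + μ {x} ≤ 1 := by
  rw [← measure_union' (Set.disjoint_singleton_right.2 hx) hs]
  exact prob_le_one

theorem tsum_measure_singleton_sq_ne_zero [NeZero μ] (hA : A.Countable) (hAc : μ Aᶜ = 0) :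
    ∑' a : A, μ {(a : X)} ^ 2 ≠ 0 := by
  intro h
  have hatoms : ∀ a ∈ A, μ {a} = 0 := fun a ha =>
    pow_eq_zero_iff two_ne_zero |>.1 (ENNReal.tsum_eq_zero.1 h ⟨a, ha⟩)
  have hA0 : μ A = 0 := by
    simpa using (measure_biUnion_null_iff hA).2 hatoms
  refine NeZero.ne μ (Measure.measure_univ_eq_zero.1 (le_antisymm ?_ zero_le))
  calc μ Set.univ = μ (A ∪ Aᶜ) := by rw [Set.union_compl_self]
    _ ≤ μ A + μ Aᶜ := measure_union_le A Aᶜ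
    _ = 0 := by rw [hA0, hAc, add_zero]

theorem lintegral_measure_add_tsum_sq_le_one [MeasurableSingletonClass X]
    [IsProbabilityMeasure μ] (hA : A.Countable) (hAc : μ Aᶜ = 0)
    {E : X → Set X} (hE : ∀ x, MeasurableSet (E x)) (hxE : ∀ x, x ∉ E x) :
    ∫⁻ x, μ (E x) ∂μ + ∑' a : A, μ {(a : X)} ^ 2 ≤ 1 :=
  calc ∫⁻ x, μ (E x) ∂μ + ∑' a : A, μ {(a : X)} ^ 2
      = ∫⁻ x, μ (E x) ∂μ + ∫⁻ x, μ {x} ∂μ := by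
        rw [lintegral_measure_singleton_eq_tsum_sq hA hAc]
    _ ≤ ∫⁻ x, (μ (E x) + μ {x}) ∂μ := le_lintegral_add _ _
    _ ≤ ∫⁻ _, 1 ∂μ := lintegral_mono fun x => measure_add_measure_singleton_le_one (hE x) (hxE x)
    _ = 1 := by simp

end MeasureTheory

theorem lintegral_avoiding_le_of_purely_atomic_general {X : Type*} [MetricSpace X]
    [MeasurableSpace X] [BorelSpace X]
    (μ : Measure X) [IsProbabilityMeasure μ]
    (A : Set X) (hA : A.Countable) (hAc : μ Aᶜ = 0)
    (E : X → Set X) (hE : ∀ x, MeasurableSet (E x)) (hxE : ∀ x, x ∉ E x) :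
    (∫⁻ x, μ (E x) ∂μ ≤ 1 - ∑' a : A, μ {(a : X)} ^ 2) ∧
    (1 - ∑' a : A, μ {(a : X)} ^ 2 < 1) := by
  have hkey := lintegral_measure_add_tsum_sq_le_one hA hAc hE hxE
  have hsum_ne_top : ∑' a : A, μ {(a : X)} ^ 2 ≠ ∞ :=
    ne_top_of_le_ne_top ENNReal.one_ne_top (le_add_self.trans hkey)
  exact ⟨ENNReal.le_sub_of_add_le_right hsum_ne_top hkey,
    ENNReal.sub_lt_self ENNReal.one_ne_top one_ne_zero (tsum_measure_singleton_sq_ne_zero hA hAc)⟩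

/-- Let `μ` be a purely atomic Borel probability measure on a separable metric space
(`A` countable with `μ(X \ A) = 0`), and let `E` assign to each `x` a Borel set `E x` with
`x ∉ E x`, such that `x ↦ μ (E x)` is measurable.  Then
`∫ μ(E x) dμ(x) ≤ 1 - ∑_{a ∈ A} μ({a})² < 1`. -/
theorem lintegral_avoiding_le_of_purely_atomic {X : Type*} [MetricSpace X]
    [TopologicalSpace.SeparableSpace X] [MeasurableSpace X] [BorelSpace X]
    (μ : Measure X) [IsProbabilityMeasure μ]
    (A : Set X) (hA : A.Countable) (hAc : μ Aᶜ = 0)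
    (E : X → Set X) (hE : ∀ x, MeasurableSet (E x)) (hxE : ∀ x, x ∉ E x)
    (hmeas : Measurable fun x => μ (E x)) :
    (∫⁻ x, μ (E x) ∂μ ≤ 1 - ∑' a : A, μ {(a : X)} ^ 2) ∧
    (1 - ∑' a : A, μ {(a : X)} ^ 2 < 1) :=
  lintegral_avoiding_le_of_purely_atomic_general μ A hA hAc E hE hxE
end

section
/- Let i denote the point of the upper half-plane corresponding to the complex number i. For every a > 0 and every point z of the upper half-plane whose complex absolute value equals a, the hyperbolic distance satisfies dist(i, z) ≥ |log a|, and equality holds for the point z = a·i. (Thus the hyperbolic distance from i to the geodesic {z : |z| = a} joining the boundary points −a and a equals |log a|.) -/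
open Real

/-!
Since `cosh (dist i z) = (‖z‖² + 1) / (2 Im z)` and `Im z ≤ ‖z‖ = a`, we get
`cosh (dist i z) ≥ (a² + 1) / (2a) = cosh (log a)`, with equality when `Im z = a`, i.e. `z = a i`.
-/

namespace UpperHalfPlane

theorem cosh_dist_I (z : ℍ) : cosh (dist I z) = (‖(z : ℂ)‖ ^ 2 + 1) / (2 * z.im) := by
  rw [cosh_dist', Complex.sq_norm, Complex.normSq_apply]
  simp only [I_re, I_im, coe_re, coe_im]
  ring

theorem abs_log_norm_le_dist_I (z : ℍ) : |log ‖(z : ℂ)‖| ≤ dist I z := by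
  have him : 0 < z.im := z.im_pos
  have hnorm : z.im ≤ ‖(z : ℂ)‖ := (le_abs_self _).trans (Complex.abs_im_le_norm (z : ℂ))
  have hcosh : cosh (log ‖(z : ℂ)‖) ≤ cosh (dist I z) := by
    rw [cosh_dist_I, cosh_log (him.trans_le hnorm)]
    calc (‖(z : ℂ)‖ + ‖(z : ℂ)‖⁻¹) / 2 = (‖(z : ℂ)‖ ^ 2 + 1) / (2 * ‖(z : ℂ)‖) := by
          field_simp
      _ ≤ (‖(z : ℂ)‖ ^ 2 + 1) / (2 * z.im) := by gcongr
  simpa only [abs_of_nonneg dist_nonneg] using cosh_le_cosh.mp hcosh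

theorem dist_I_of_re_eq_zero {z : ℍ} (hz : z.re = 0) : dist I z = |log z.im| := by
  rw [dist_of_re_eq (by rw [hz]; rfl), I_im, log_one, Real.dist_eq, zero_sub, abs_neg]

end UpperHalfPlane

/-- In the upper half-plane with its hyperbolic metric, for every `a > 0` and every point `z`
with `|z| = a`, the distance from `i` satisfies `dist(i, z) ≥ |log a|`, with equality at the
point `z = a i`.  Thus the hyperbolic distance from `i` to the geodesic `{z : |z| = a}`
joining the boundary points `-a` and `a` equals `|log a|`. -/
theorem dist_I_to_semicircle (a : ℝ) (ha : 0 < a) :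
    (∀ z : UpperHalfPlane, ‖(z : ℂ)‖ = a →
      |Real.log a| ≤ dist UpperHalfPlane.I z) ∧
    (∃ z : UpperHalfPlane, (z : ℂ) = (a : ℂ) * Complex.I ∧
      dist UpperHalfPlane.I z = |Real.log a|) := by
  refine ⟨fun z hz => hz ▸ UpperHalfPlane.abs_log_norm_le_dist_I z, ?_⟩
  refine ⟨⟨a * Complex.I, by simpa using ha⟩, rfl, ?_⟩
  rw [UpperHalfPlane.dist_I_of_re_eq_zero (by simp [UpperHalfPlane.re])]
  simp [UpperHalfPlane.im]
end

section
/- Let μ be a Borel probability measure on ℂ supported on the unit circle (μ of the complement of {z : |z| = 1} is 0) and satisfying μ({−i}) = 0. Then for every bounded continuous function f : ℂ → ℝ, ∫ f(φ_t(z)) dμ(z) → f(i) as t → 1 from the left. (That is, the pushforward measures (φ_t)_*μ converge weakly to the Dirac measure at i as t → 1⁻; this is the concentration of the transformed visual measures used to prove that the α-core of a hyperbolic graph is a bounded set.) -/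
open Complex Filter MeasureTheory Topology
open scoped BoundedContinuousFunction

/-!
At `t = 1` the map `φ_t(z) = (z + it)/(1 - itz)` is the constant `i` away from its pole `-i`,
since `z + i = i (1 - iz)`. So `f ∘ φ_t → f(i)` pointwise off `{-i}`, a `μ`-null set, and
dominated convergence (with the constant bound `‖f‖`) gives the limit.
-/

noncomputable def mobiusMap (t : ℝ) (z : ℂ) : ℂ := (z + t * I) / (1 - t * I * z)

lemma one_sub_I_mul_ne_zero {z : ℂ} (hz : z ≠ -I) : 1 - I * z ≠ 0 := fun h => hz <| by
  linear_combination I * h + z * I_sq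

lemma mobiusMap_one_eq_I {z : ℂ} (hz : z ≠ -I) : mobiusMap 1 z = I := by
  rw [mobiusMap, ofReal_one, one_mul, div_eq_iff (one_sub_I_mul_ne_zero hz)]
  linear_combination z * I_sq

lemma tendsto_mobiusMap_nhds_I {z : ℂ} (hz : z ≠ -I) :
    Tendsto (fun t : ℝ => mobiusMap t z) (𝓝 1) (𝓝 I) := by
  have hden : (1 : ℂ) - ((1 : ℝ) : ℂ) * I * z ≠ 0 := by
    simpa using one_sub_I_mul_ne_zero hz
  have hcont : ContinuousAt (fun t : ℝ => mobiusMap t z) 1 := by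
    unfold mobiusMap
    exact ContinuousAt.div (by fun_prop) (by fun_prop) hden
  simpa [ContinuousAt, mobiusMap_one_eq_I hz] using hcont

lemma measurable_mobiusMap (t : ℝ) : Measurable (mobiusMap t) := by
  unfold mobiusMap
  fun_prop

lemma BoundedContinuousFunction.tendsto_integral_comp_of_ae_tendsto
    {α X E ι : Type*} [MeasurableSpace α] [TopologicalSpace X] [MeasurableSpace X]
    [OpensMeasurableSpace X] [NormedAddCommGroup E] [NormedSpace ℝ E]
    [SecondCountableTopologyEither X E] {μ : Measure α} [IsFiniteMeasure μ]
    {l : Filter ι} [l.IsCountablyGenerated] (f : X →ᵇ E) {g : ι → α → X} {x : α → X}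
    (hg : ∀ i, Measurable (g i)) (hlim : ∀ᵐ a ∂μ, Tendsto (fun i => g i a) l (𝓝 (x a))) :
    Tendsto (fun i => ∫ a, f (g i a) ∂μ) l (𝓝 (∫ a, f (x a) ∂μ)) := by
  refine tendsto_integral_filter_of_dominated_convergence (fun _ => ‖f‖) ?_ ?_
    (integrable_const _) ?_
  · exact Eventually.of_forall fun i =>
      (f.continuous.stronglyMeasurable.comp_measurable (hg i)).aestronglyMeasurable
  · exact Eventually.of_forall fun i => Eventually.of_forall fun a => f.norm_coe_le_norm _
  · filter_upwards [hlim] with a ha using (f.continuous.tendsto _).comp ha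

theorem mobius_pushforward_tendsto_dirac_general (μ : Measure ℂ) [IsProbabilityMeasure μ]
    (hatom : μ {-Complex.I} = 0) :
    ∀ f : BoundedContinuousFunction ℂ ℝ,
      Tendsto
        (fun t : ℝ => ∫ z, f ((z + (t : ℂ) * Complex.I) / (1 - (t : ℂ) * Complex.I * z)) ∂μ)
        (nhdsWithin 1 (Set.Ioo (0 : ℝ) 1)) (nhds (f Complex.I)) := by
  intro f
  have hae : ∀ᵐ z ∂μ, Tendsto (fun t : ℝ => mobiusMap t z) (𝓝 1) (𝓝 I) := by
    filter_upwards [measure_eq_zero_iff_ae_notMem.mp hatom] with z hz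
    exact tendsto_mobiusMap_nhds_I hz
  have hlim := f.tendsto_integral_comp_of_ae_tendsto measurable_mobiusMap hae
  rw [integral_const, probReal_univ, one_smul] at hlim
  exact hlim.mono_left nhdsWithin_le_nhds

/-- Let `μ` be a Borel probability measure on `ℂ` supported on the unit circle and with
`μ({-i}) = 0`.  Then for every bounded continuous `f : ℂ → ℝ`,
`∫ f(φ_t(z)) dμ(z) → f(i)` as `t → 1⁻`, where `φ_t(z) = (z + it)/(1 - itz)`; that is, the
pushforwards `(φ_t)_* μ` converge weakly to the Dirac measure at `i`. -/
theorem mobius_pushforward_tendsto_dirac (μ : Measure ℂ) [IsProbabilityMeasure μ]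
    (hcirc : μ ({z : ℂ | ‖z‖ = 1}ᶜ) = 0) (hatom : μ {-Complex.I} = 0) :
    ∀ f : BoundedContinuousFunction ℂ ℝ,
      Tendsto
        (fun t : ℝ => ∫ z, f ((z + (t : ℂ) * Complex.I) / (1 - (t : ℂ) * Complex.I * z)) ∂μ)
        (nhdsWithin 1 (Set.Ioo (0 : ℝ) 1)) (nhds (f Complex.I)) :=
  mobius_pushforward_tendsto_dirac_general μ hatom
end
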